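/- arXiv:gr-qc/9604056 — 6 statements merged into one kernel-verified Lean document; each statement's English description precedes it below -/
import Mathlib

section
/- Elements g₁, g₂, g₃ of the Nil group satisfy the relations of the fundamental group of the compact manifold b/1, namely [g₁,g₂]·g₃⁻¹ = e, [g₁,g₃] = e and [g₂,g₃] = e (where [g,h] = g·h·g⁻¹·h⁻¹ and e = (0,0,0)), if and only if g₃ = (0, 0, g₁¹g₂² − g₁²g₂¹). -/
noncomputable section

/-- Multiplication in the Nil (Bianchi II) group on ℝ³. -/
def nilMul (g h : ℝ × ℝ × ℝ) : ℝ × ℝ × ℝ :=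
  (g.1 + h.1, g.2.1 + h.2.1, g.2.2 + h.2.2 + g.1 * h.2.1)

/-- Inverse in the Nil group. -/
def nilInv (g : ℝ × ℝ × ℝ) : ℝ × ℝ × ℝ :=
  (-g.1, -g.2.1, -g.2.2 + g.1 * g.2.1)

/-- Commutator `[g,h] = g·h·g⁻¹·h⁻¹` in the Nil group. -/
def nilComm (g h : ℝ × ℝ × ℝ) : ℝ × ℝ × ℝ :=
  nilMul (nilMul (nilMul g h) (nilInv g)) (nilInv h)

/-- Elements `g₁, g₂, g₃` of Nil satisfy the relations of the fundamental group of b/1,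
namely `[g₁,g₂]·g₃⁻¹ = e`, `[g₁,g₃] = e`, `[g₂,g₃] = e`, iff
`g₃ = (0, 0, g₁¹g₂² − g₁²g₂¹)`. -/
theorem nil_b1_relations_iff (g₁ g₂ g₃ : ℝ × ℝ × ℝ) :
    (nilMul (nilComm g₁ g₂) (nilInv g₃) = ((0 : ℝ), (0 : ℝ), (0 : ℝ)) ∧
     nilComm g₁ g₃ = ((0 : ℝ), (0 : ℝ), (0 : ℝ)) ∧
     nilComm g₂ g₃ = ((0 : ℝ), (0 : ℝ), (0 : ℝ))) ↔
    g₃ = ((0 : ℝ), (0 : ℝ), g₁.1 * g₂.2.1 - g₁.2.1 * g₂.1) := by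
  obtain ⟨a, b, c⟩ := g₃
  simp only [nilComm, nilMul, nilInv, Prod.ext_iff, Prod.mk.injEq]
  constructor
  · rintro ⟨⟨h1, h2, h3⟩, -⟩
    refine ⟨by linarith, by linarith, by nlinarith [h1, h2, h3]⟩
  · rintro ⟨rfl, rfl, rfl⟩
    refine ⟨⟨by ring, by ring, by ring⟩, ⟨by ring, by ring, by ring⟩, by ring, by ring, by ring⟩
end
end

section
/- Let g₁, g₂ be elements of the Nil group with d := g₁¹g₂² − g₁²g₂¹ ≠ 0, and set h := ((g₁³g₂¹ − g₁¹g₂³)/d, (g₁³g₂² − g₁²g₂³)/d, 0). Then the conjugates h·g₁·h⁻¹ and h·g₂·h⁻¹ have vanishing third component and the same first two components as g₁ and g₂ respectively, i.e. h·gᵢ·h⁻¹ = (gᵢ¹, gᵢ², 0) for i = 1,2; moreover h·g₃·h⁻¹ = g₃ for g₃ = (0,0,d). -/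
noncomputable section

theorem nilMul_nilMul_nilInv (h g : ℝ × ℝ × ℝ) :
    nilMul (nilMul h g) (nilInv h) = (g.1, g.2.1, g.2.2 + h.1 * g.2.1 - h.2.1 * g.1) := by
  simp only [nilMul, nilInv, Prod.mk.injEq]
  refine ⟨by ring, by ring, by ring⟩

/-- Cramer's rule for the system `z₁ + a y₁ - b x₁ = 0`, `z₂ + a y₂ - b x₂ = 0` in `(a, b)`. -/
theorem cramer_solution {K : Type*} [Field K] {x₁ y₁ z₁ x₂ y₂ z₂ : K}
    (hd : x₁ * y₂ - y₁ * x₂ ≠ 0) :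
    z₁ + (z₁ * x₂ - x₁ * z₂) / (x₁ * y₂ - y₁ * x₂) * y₁
        - (z₁ * y₂ - y₁ * z₂) / (x₁ * y₂ - y₁ * x₂) * x₁ = 0 ∧
    z₂ + (z₁ * x₂ - x₁ * z₂) / (x₁ * y₂ - y₁ * x₂) * y₂
        - (z₁ * y₂ - y₁ * z₂) / (x₁ * y₂ - y₁ * x₂) * x₂ = 0 := by
  constructor <;>
  · rw [div_mul_eq_mul_div, div_mul_eq_mul_div, add_sub_assoc, ← sub_div, add_div' _ _ _ hd,
      div_eq_zero_iff]
    exact Or.inl (by ring)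

/-- Conjugating `g₁`, `g₂` by the specific element `h` kills their third components
while fixing the first two components, and `h` fixes `g₃ = (0,0,d)`. -/
theorem nil_conjugation_normalizes (g₁ g₂ : ℝ × ℝ × ℝ)
    (d : ℝ) (hd : d = g₁.1 * g₂.2.1 - g₁.2.1 * g₂.1) (hd0 : d ≠ 0)
    (h : ℝ × ℝ × ℝ)
    (hh : h = ((g₁.2.2 * g₂.1 - g₁.1 * g₂.2.2) / d,
               (g₁.2.2 * g₂.2.1 - g₁.2.1 * g₂.2.2) / d, (0 : ℝ))) :
    nilMul (nilMul h g₁) (nilInv h) = (g₁.1, g₁.2.1, (0 : ℝ)) ∧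
    nilMul (nilMul h g₂) (nilInv h) = (g₂.1, g₂.2.1, (0 : ℝ)) ∧
    nilMul (nilMul h ((0 : ℝ), (0 : ℝ), d)) (nilInv h) = ((0 : ℝ), (0 : ℝ), d) := by
  subst hh hd
  obtain ⟨h₁, h₂⟩ := cramer_solution (z₁ := g₁.2.2) (z₂ := g₂.2.2) hd0
  simp only [nilMul_nilMul_nilInv, h₁, h₂, mul_zero, add_zero, sub_zero, and_self]
end
end

section
/- For every θ ∈ ℝ, the map s_θ satisfies the equivariance property s_θ(h·p) = σ_θ(h)·s_θ(p) for all h, p in the Nil group, where σ_θ(h) := (R_θ(h¹,h²), h³ + ζ_θ(h¹,h²)). In particular σ_θ : Nil → Nil is a group automorphism of the Nil group, and s_θ ∘ L_h ∘ s_θ⁻¹ = L_{σ_θ(h)} where L_g denotes left translation p ↦ g·p. -/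
noncomputable section

open Real

/-- `ζ_θ(x,y) = ½((x²−y²)cos θ − 2xy sin θ) sin θ`. -/
def zeta (θ x y : ℝ) : ℝ :=
  (1 / 2) * ((x ^ 2 - y ^ 2) * Real.cos θ - 2 * x * y * Real.sin θ) * Real.sin θ

/-- `s_θ(x,y,z) = (R_θ(x,y), z + ζ_θ(x,y))`, with `R_θ` the rotation of ℝ² by angle θ. -/
def sMap (θ : ℝ) (p : ℝ × ℝ × ℝ) : ℝ × ℝ × ℝ :=
  (p.1 * Real.cos θ - p.2.1 * Real.sin θ,
   p.1 * Real.sin θ + p.2.1 * Real.cos θ,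
   p.2.2 + zeta θ p.1 p.2.1)

/-- `σ_θ(h) = (R_θ(h¹,h²), h³ + ζ_θ(h¹,h²))`. -/
def sigmaMap (θ : ℝ) (h : ℝ × ℝ × ℝ) : ℝ × ℝ × ℝ :=
  (h.1 * Real.cos θ - h.2.1 * Real.sin θ,
   h.1 * Real.sin θ + h.2.1 * Real.cos θ,
   h.2.2 + zeta θ h.1 h.2.1)

lemma sigmaMap_eq_sMap (θ : ℝ) : sigmaMap θ = sMap θ := rfl

lemma sMap_equiv (θ : ℝ) (h p : ℝ × ℝ × ℝ) :
    sMap θ (nilMul h p) = nilMul (sigmaMap θ h) (sMap θ p) := by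
  simp only [sMap, sigmaMap, nilMul, zeta, Prod.mk.injEq]
  refine ⟨by ring, by ring, ?_⟩
  linear_combination (-(h.1 * p.2.1)) * Real.sin_sq_add_cos_sq θ

lemma sMap_inv (θ : ℝ) (p : ℝ × ℝ × ℝ) : sMap (-θ) (sMap θ p) = p := by
  obtain ⟨x, y, z⟩ := p
  simp only [sMap, zeta, Real.cos_neg, Real.sin_neg, Prod.mk.injEq]
  have hc := Real.sin_sq_add_cos_sq θ
  refine ⟨by linear_combination x * hc, by linear_combination y * hc, ?_⟩
  linear_combination ((1/2) * ((x ^ 2 - y ^ 2) * Real.cos θ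
    - 2 * x * y * Real.sin θ) * Real.sin θ
    + (-(x ^ 2) * Real.cos θ * Real.sin θ + y ^ 2 * Real.cos θ * Real.sin θ
      + 2 * x * y * Real.sin θ ^ 2)) * hc

lemma sMap_bij (θ : ℝ) : Function.Bijective (sMap θ) := by
  refine ⟨fun a b hab => ?_, fun p => ⟨sMap (-θ) p, ?_⟩⟩
  · have := congrArg (sMap (-θ)) hab
    rwa [sMap_inv, sMap_inv] at this
  · have := sMap_inv (-θ) p
    rwa [neg_neg] at this

/-- `s_θ` is equivariant: `s_θ(h·p) = σ_θ(h)·s_θ(p)`; `σ_θ` is a group automorphism of Nil;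
`s_θ` is bijective and `s_θ ∘ L_h = L_{σ_θ(h)} ∘ s_θ`, i.e. `s_θ ∘ L_h ∘ s_θ⁻¹ = L_{σ_θ(h)}`. -/
theorem sTheta_equivariance (θ : ℝ) :
    (∀ h p : ℝ × ℝ × ℝ, sMap θ (nilMul h p) = nilMul (sigmaMap θ h) (sMap θ p)) ∧
    (∀ g h : ℝ × ℝ × ℝ,
       sigmaMap θ (nilMul g h) = nilMul (sigmaMap θ g) (sigmaMap θ h)) ∧
    Function.Bijective (sigmaMap θ) ∧
    Function.Bijective (sMap θ) ∧
    (∀ h : ℝ × ℝ × ℝ,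
       (sMap θ) ∘ (fun p => nilMul h p) = (fun p => nilMul (sigmaMap θ h) p) ∘ (sMap θ)) := by
  refine ⟨sMap_equiv θ, ?_, ?_, sMap_bij θ, fun h => funext fun p => sMap_equiv θ h p⟩
  · intro g h; rw [sigmaMap_eq_sMap]; exact sMap_equiv θ g h
  · rw [sigmaMap_eq_sMap]; exact sMap_bij θ
end
end

section
/- For every θ ∈ ℝ, the map s_θ is an isometry of the standard Nil metric: for all p, v, w ∈ ℝ³, Q_{s_θ(p)}(Ds_θ(p)v, Ds_θ(p)w) = Q_p(v,w), where Ds_θ(p) is the Fréchet derivative of s_θ at p and Q_p(v,w) := v¹w¹ + v²w² + (v³ − p¹v²)(w³ − p¹w²). -/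
/-!
The Nil metric is `dx² + dy² + α²` with `α = dz − x dy`. The linear part of `s_θ` rotates
`(dx, dy)` and so preserves `dx² + dy²`, while `ζ_θ` is a primitive of `x' dy' − x dy`
(`(x', y') = R_θ(x, y)`), so that `s_θ` pulls `α` back to itself.
-/

noncomputable section

open Real

/-- The standard Nil metric: at the point `p`, the bilinear form
`Q_p(v,w) = v¹w¹ + v²w² + (v³ − p¹v²)(w³ − p¹w²)`, i.e. `dl² = dx² + dy² + (dz − x dy)²`. -/
def nilStdMetric (p v w : ℝ × ℝ × ℝ) : ℝ :=
  v.1 * w.1 + v.2.1 * w.2.1 + (v.2.2 - p.1 * v.2.1) * (w.2.2 - p.1 * w.2.1)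

def nilContactForm (p v : ℝ × ℝ × ℝ) : ℝ :=
  v.2.2 - p.1 * v.2.1

theorem nilStdMetric_eq_add_mul_nilContactForm (p v w : ℝ × ℝ × ℝ) :
    nilStdMetric p v w =
      v.1 * w.1 + v.2.1 * w.2.1 + nilContactForm p v * nilContactForm p w :=
  rfl

theorem rotation_dot_eq {c s : ℝ} (h : s ^ 2 + c ^ 2 = 1) (a b a' b' : ℝ) :
    (a * c - b * s) * (a' * c - b' * s) + (a * s + b * c) * (a' * s + b' * c) = a * a' + b * b' := by
  linear_combination (a * a' + b * b') * h

theorem fderiv_sMap_apply (θ : ℝ) (p v : ℝ × ℝ × ℝ) :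
    fderiv ℝ (sMap θ) p v =
      (v.1 * cos θ - v.2.1 * sin θ, v.1 * sin θ + v.2.1 * cos θ,
       v.2.2 + ((p.1 * v.1 - p.2.1 * v.2.1) * cos θ - (p.1 * v.2.1 + p.2.1 * v.1) * sin θ) * sin θ) := by
  have hx : HasFDerivAt (𝕜 := ℝ) (fun q : ℝ × ℝ × ℝ => q.1) _ p := hasFDerivAt_fst
  have hy : HasFDerivAt (𝕜 := ℝ) (fun q : ℝ × ℝ × ℝ => q.2.1) _ p :=
    hasFDerivAt_fst.comp p hasFDerivAt_snd
  have hz : HasFDerivAt (𝕜 := ℝ) (fun q : ℝ × ℝ × ℝ => q.2.2) _ p :=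
    hasFDerivAt_snd.comp p hasFDerivAt_snd
  have hζ := (((((hx.pow 2).sub (hy.pow 2)).mul_const (cos θ)).sub
    (((hx.const_mul 2).mul hy).mul_const (sin θ))).const_mul (1 / 2)).mul_const (sin θ)
  have hs : HasFDerivAt (sMap θ) _ p :=
    ((hx.mul_const _).sub (hy.mul_const _)).prodMk
      (((hx.mul_const _).add (hy.mul_const _)).prodMk (hz.add hζ))
  rw [hs.fderiv]
  ext <;> simp only [ContinuousLinearMap.prod_apply, add_apply, sub_apply, smul_apply,
    ContinuousLinearMap.comp_apply, ContinuousLinearMap.coe_fst', ContinuousLinearMap.coe_snd',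
    smul_eq_mul, nsmul_eq_mul] <;> ring

theorem nilContactForm_sMap (θ : ℝ) (p v : ℝ × ℝ × ℝ) :
    nilContactForm (sMap θ p) (fderiv ℝ (sMap θ) p v) = nilContactForm p v := by
  rw [fderiv_sMap_apply]
  simp only [nilContactForm, sMap]
  linear_combination (-p.1 * v.2.1) * sin_sq_add_cos_sq θ

/-- For every `θ`, `s_θ` is an isometry of the standard Nil metric. -/
theorem sTheta_isometry (θ : ℝ) (p v w : ℝ × ℝ × ℝ) :
    nilStdMetric (sMap θ p) (fderiv ℝ (sMap θ) p v) (fderiv ℝ (sMap θ) p w)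
      = nilStdMetric p v w := by
  rw [nilStdMetric_eq_add_mul_nilContactForm, nilStdMetric_eq_add_mul_nilContactForm,
    nilContactForm_sMap, nilContactForm_sMap, fderiv_sMap_apply, fderiv_sMap_apply,
    rotation_dot_eq (sin_sq_add_cos_sq θ)]
end
end

section
/- Let n be an integer with n > 2, set c₃ := log((n + √(n²−4))/2), define (u₁, v₁) := (√((n+√(n²−4))/2), √((n−√(n²−4))/2))/√n and (u₂, v₂) := (√((n−√(n²−4))/2), √((n+√(n²−4))/2))/√n, and let α₀ ∈ ℝ. Then the elements g₁ := (α₀u₁, α₀u₂, 0), g₂ := (α₀v₁, α₀v₂, 0), g₃ := (0, 0, c₃) of the Sol group satisfy the relations of the fundamental group of the compact manifold f1/1(n): g₁·g₂ = g₂·g₁, g₃·g₁·g₃⁻¹ = g₂, and g₃·g₂·g₃⁻¹ = g₂ⁿ·g₁⁻¹. -/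
/-!
The elements `g₁`, `g₂` lie in the abelian normal subgroup `ℝ² × {0}`, on which the group law
is vector addition and conjugation by `g₃ = (0, 0, c₃)` acts as `diag (e^{-c₃}, e^{c₃}) = diag (μ, λ)`,
where `λ, μ = (n ± √(n² - 4)) / 2` are the roots of `x² - n x + 1`. Since `λ μ = 1`, we get
`μ √λ = √μ` and `λ √μ = √λ`, so this diagonal map sends `g₁` to `g₂`; since moreover `λ + μ = n`,
it sends `g₂` to `n g₂ - g₁`, which is `g₂ⁿ g₁⁻¹` written additively.
-/

noncomputable section

open Real

/-- Multiplication in the Sol (Bianchi VI₀) group on ℝ³: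
`(g¹,g²,g³)·(h¹,h²,h³) = (g¹ + e^{−g³}h¹, g² + e^{g³}h², g³ + h³)`. -/
def solMul (g h : ℝ × ℝ × ℝ) : ℝ × ℝ × ℝ :=
  (g.1 + Real.exp (-g.2.2) * h.1, g.2.1 + Real.exp g.2.2 * h.2.1, g.2.2 + h.2.2)

/-- Inverse in the Sol group. -/
def solInv (g : ℝ × ℝ × ℝ) : ℝ × ℝ × ℝ :=
  (-Real.exp g.2.2 * g.1, -Real.exp (-g.2.2) * g.2.1, -g.2.2)

/-- `n`-fold product in the Sol group. -/
def solPow (g : ℝ × ℝ × ℝ) : ℕ → ℝ × ℝ × ℝ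
  | 0 => ((0 : ℝ), (0 : ℝ), (0 : ℝ))
  | k + 1 => solMul (solPow g k) g

lemma solMul_flat (a b a' b' : ℝ) :
    solMul (a, b, 0) (a', b', 0) = (a + a', b + b', 0) := by
  simp [solMul]

lemma solInv_flat (a b : ℝ) : solInv (a, b, 0) = (-a, -b, 0) := by
  simp [solInv]

lemma solPow_flat (a b : ℝ) (k : ℕ) : solPow (a, b, 0) k = (k * a, k * b, 0) := by
  induction k with
  | zero => simp [solPow]
  | succ k ih =>
    rw [solPow, ih, solMul_flat]
    push_cast
    ring_nf

lemma solMul_solMul_solInv_vertical (c a b t : ℝ) :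
    solMul (solMul (0, 0, c) (a, b, t)) (solInv (0, 0, c)) = (exp (-c) * a, exp c * b, t) := by
  simp [solMul, solInv]

lemma mul_sqrt_eq_sqrt_of_mul_eq_one {x y : ℝ} (hy : 0 ≤ y) (h : x * y = 1) :
    y * √x = √y := by
  calc y * √x = √(y ^ 2 * x) := by rw [Real.sqrt_mul (sq_nonneg y), Real.sqrt_sq hy]
    _ = √y := by congr 1; linear_combination y * h

lemma add_sqrt_sq_sub_four_mul_sub {t : ℝ} (ht : 2 ≤ t) :
    (t + √(t ^ 2 - 4)) / 2 * ((t - √(t ^ 2 - 4)) / 2) = 1 := by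
  have hs : √(t ^ 2 - 4) ^ 2 = t ^ 2 - 4 := Real.sq_sqrt (by nlinarith)
  linear_combination -hs / 4

lemma add_sqrt_sq_sub_four_pos {t : ℝ} (ht : 2 ≤ t) : 0 < (t + √(t ^ 2 - 4)) / 2 := by
  positivity

theorem sol_relations_of_mul_eq_one {l m : ℝ} (k : ℕ) (hl : 0 < l) (hlm : l * m = 1)
    (hsum : l + m = k) (α d : ℝ) :
    let g₁ : ℝ × ℝ × ℝ := (α * (√l / d), α * (√m / d), 0)
    let g₂ : ℝ × ℝ × ℝ := (α * (√m / d), α * (√l / d), 0)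
    let g₃ : ℝ × ℝ × ℝ := (0, 0, log l)
    solMul g₁ g₂ = solMul g₂ g₁ ∧
    solMul (solMul g₃ g₁) (solInv g₃) = g₂ ∧
    solMul (solMul g₃ g₂) (solInv g₃) = solMul (solPow g₂ k) (solInv g₁) := by
  intro g₁ g₂ g₃
  have hm : 0 < m := pos_of_mul_pos_right (hlm ▸ one_pos) hl.le
  have hexp : exp (log l) = l := exp_log hl
  have hexp_neg : exp (-log l) = m := by
    rw [exp_neg, hexp, inv_eq_of_mul_eq_one_right hlm]
  have hm_sqrt : m * √l = √m := mul_sqrt_eq_sqrt_of_mul_eq_one hm.le hlm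
  have hl_sqrt : l * √m = √l := mul_sqrt_eq_sqrt_of_mul_eq_one hl.le (by rwa [mul_comm])
  refine ⟨?_, ?_, ?_⟩
  · simp only [g₁, g₂, solMul_flat, add_comm]
  · simp only [g₁, g₂, g₃, solMul_solMul_solInv_vertical, hexp, hexp_neg, Prod.mk.injEq]
    refine ⟨?_, ?_, trivial⟩
    · linear_combination α / d * hm_sqrt
    · linear_combination α / d * hl_sqrt
  · simp only [g₁, g₂, g₃, solMul_solMul_solInv_vertical, hexp, hexp_neg, solPow_flat,
      solInv_flat, solMul_flat, Prod.mk.injEq]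
    refine ⟨?_, ?_, trivial⟩
    · linear_combination -(α / d) * hl_sqrt + α * √m / d * hsum
    · linear_combination -(α / d) * hm_sqrt + α * √l / d * hsum

/-- The generators `g₁ = (α₀u₁, α₀u₂, 0)`, `g₂ = (α₀v₁, α₀v₂, 0)`, `g₃ = (0,0,c₃)`
satisfy the relations of the fundamental group of `f1/1(n)`:
`[g₁,g₂] = e`, `g₃g₁g₃⁻¹ = g₂` and `g₃g₂g₃⁻¹ = g₂ⁿ·g₁⁻¹`. -/
theorem sol_f1_relations (n : ℤ) (hn : 2 < n) (α₀ : ℝ) :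
    let c₃ : ℝ := Real.log (((n : ℝ) + Real.sqrt ((n : ℝ) ^ 2 - 4)) / 2)
    let u₁ : ℝ := Real.sqrt (((n : ℝ) + Real.sqrt ((n : ℝ) ^ 2 - 4)) / 2) / Real.sqrt (n : ℝ)
    let v₁ : ℝ := Real.sqrt (((n : ℝ) - Real.sqrt ((n : ℝ) ^ 2 - 4)) / 2) / Real.sqrt (n : ℝ)
    let u₂ : ℝ := Real.sqrt (((n : ℝ) - Real.sqrt ((n : ℝ) ^ 2 - 4)) / 2) / Real.sqrt (n : ℝ)
    let v₂ : ℝ := Real.sqrt (((n : ℝ) + Real.sqrt ((n : ℝ) ^ 2 - 4)) / 2) / Real.sqrt (n : ℝ)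
    let g₁ : ℝ × ℝ × ℝ := (α₀ * u₁, α₀ * u₂, 0)
    let g₂ : ℝ × ℝ × ℝ := (α₀ * v₁, α₀ * v₂, 0)
    let g₃ : ℝ × ℝ × ℝ := ((0 : ℝ), (0 : ℝ), c₃)
    solMul g₁ g₂ = solMul g₂ g₁ ∧
    solMul (solMul g₃ g₁) (solInv g₃) = g₂ ∧
    solMul (solMul g₃ g₂) (solInv g₃) = solMul (solPow g₂ n.toNat) (solInv g₁) := by
  have ht : (2 : ℝ) ≤ n := by exact_mod_cast hn.le
  have hcast : ((n.toNat : ℕ) : ℝ) = n := by exact_mod_cast Int.toNat_of_nonneg (by omega)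
  exact sol_relations_of_mul_eq_one n.toNat (add_sqrt_sq_sub_four_pos ht)
    (add_sqrt_sq_sub_four_mul_sub ht) (by rw [hcast]; ring) α₀ √(n : ℝ)
end
end

section
/- Let G be a real 3×3 matrix with det G ≠ 0, let t > 0 and p₁, p₂, p₃ ∈ ℝ with σ := p₁ + p₂ + p₃, and let D := diag(t^{2p₁}, t^{2p₂}, t^{2p₃}). For i = 2,3 and α = 1,2,3 let ḡᵢ^α denote the (i,α) cofactor of G, and set Δ := √(Σ_α t^{2(σ−p_α)}(ḡ₃^α)²), a₁₁ := √(Σ_α t^{2p_α}(G₁α)²), a₂₁ := (Σ_α t^{2p_α} G₁α G₂α)/a₁₁, a₃₁ := (Σ_α t^{2p_α} G₁α G₃α)/a₁₁, a₂₂ := Δ/a₁₁, a₃₂ := −(Σ_α t^{2(σ−p_α)} ḡ₃^α ḡ₂^α)/(a₁₁·Δ), a₃₃ := |det G|·t^{σ}/Δ. Then a₁₁ > 0, Δ > 0, and the lower-triangular matrix A = [[a₁₁,0,0],[a₂₁,a₂₂,0],[a₃₁,a₃₂,a₃₃]] satisfies A·Aᵀ = G·D·Gᵀ; in particular det(G·D·Gᵀ)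 = (det G)²·t^{2σ} = (a₁₁a₂₂a₃₃)². -/
noncomputable section

open Real Matrix

set_option maxHeartbeats 2000000 in
/-- The Teichmüller parameters of a flat 3-torus section of the Kasner spacetime:
the lower-triangular matrix `A` built from the Teichmüller parameters satisfies
`A·Aᵀ = G·D·Gᵀ`, where `G·D·Gᵀ` is the loop matrix `H_{ij} = Σ_α t^{2p_α} G_{iα}G_{jα}`. -/
theorem kasner_loop_matrix_decomposition
    (G : Matrix (Fin 3) (Fin 3) ℝ) (hG : G.det ≠ 0)
    (t : ℝ) (ht : 0 < t) (p₁ p₂ p₃ : ℝ) :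
    let p : Fin 3 → ℝ := ![p₁, p₂, p₃]
    let σ : ℝ := p₁ + p₂ + p₃
    let D : Matrix (Fin 3) (Fin 3) ℝ := Matrix.diagonal fun α => t ^ (2 * p α)
    -- `cof i α` is the (i,α) cofactor of `G`
    let cof : Fin 3 → Fin 3 → ℝ := fun i α =>
      (-1 : ℝ) ^ ((i : ℕ) + (α : ℕ)) *
        (G.submatrix i.succAbove α.succAbove).det
    let Δ : ℝ := Real.sqrt (∑ α : Fin 3, t ^ (2 * (σ - p α)) * (cof 2 α) ^ 2)
    let a₁₁ : ℝ := Real.sqrt (∑ α : Fin 3, t ^ (2 * p α) * (G 0 α) ^ 2)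
    let a₂₁ : ℝ := (∑ α : Fin 3, t ^ (2 * p α) * G 0 α * G 1 α) / a₁₁
    let a₃₁ : ℝ := (∑ α : Fin 3, t ^ (2 * p α) * G 0 α * G 2 α) / a₁₁
    let a₂₂ : ℝ := Δ / a₁₁
    let a₃₂ : ℝ := -(∑ α : Fin 3, t ^ (2 * (σ - p α)) * cof 2 α * cof 1 α) / (a₁₁ * Δ)
    let a₃₃ : ℝ := |G.det| * t ^ σ / Δ
    let A : Matrix (Fin 3) (Fin 3) ℝ :=
      !![a₁₁, 0, 0; a₂₁, a₂₂, 0; a₃₁, a₃₂, a₃₃]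
    0 < a₁₁ ∧ 0 < Δ ∧
    A * Aᵀ = G * D * Gᵀ ∧
    (G * D * Gᵀ).det = G.det ^ 2 * t ^ (2 * σ) ∧
    (G * D * Gᵀ).det = (a₁₁ * a₂₂ * a₃₃) ^ 2 := by
  intro p σ D cof Δ a₁₁ a₂₁ a₃₁ a₂₂ a₃₂ a₃₃ A
  have hσ : σ = p₁ + p₂ + p₃ := rfl
  have hp0 : p 0 = p₁ := rfl
  have hp1 : p 1 = p₂ := rfl
  have hp2 : p 2 = p₃ := rfl
  have hdet3 : G.det = (G 0 0 * G 1 1 * G 2 2 - G 0 0 * G 1 2 * G 2 1 - G 0 1 * G 1 0 * G 2 2 + G 0 1 * G 1 2 * G 2 0 + G 0 2 * G 1 0 * G 2 1 - G 0 2 * G 1 1 * G 2 0) := by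
    rw [Matrix.det_fin_three]
  -- power facts
  have hTσ : t ^ (2*σ) = t ^ (2*p₁) * t ^ (2*p₂) * t ^ (2*p₃) := by
    rw [hσ, show 2*(p₁+p₂+p₃) = 2*p₁ + 2*p₂ + 2*p₃ by ring, Real.rpow_add ht,
      Real.rpow_add ht]
  have hE0 : t ^ (2*(σ - p 0)) = t ^ (2*p₂) * t ^ (2*p₃) := by
    rw [hp0, hσ, show 2*((p₁+p₂+p₃) - p₁) = 2*p₂ + 2*p₃ by ring, Real.rpow_add ht]
  have hE1 : t ^ (2*(σ - p 1)) = t ^ (2*p₁) * t ^ (2*p₃) := by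
    rw [hp1, hσ, show 2*((p₁+p₂+p₃) - p₂) = 2*p₁ + 2*p₃ by ring, Real.rpow_add ht]
  have hE2 : t ^ (2*(σ - p 2)) = t ^ (2*p₁) * t ^ (2*p₂) := by
    rw [hp2, hσ, show 2*((p₁+p₂+p₃) - p₃) = 2*p₁ + 2*p₂ by ring, Real.rpow_add ht]
  have hT2 : (t ^ σ) ^ 2 = t ^ (2*p₁) * t ^ (2*p₂) * t ^ (2*p₃) := by
    rw [sq, ← Real.rpow_add ht, show σ + σ = 2*σ by ring, hTσ]
  -- cofactor values
  have hc20 : cof 2 0 = (G 0 1 * G 1 2 - G 0 2 * G 1 1) := by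
    show (-1 : ℝ) ^ (((2:Fin 3) : ℕ) + ((0:Fin 3) : ℕ)) *
      (G.submatrix (2:Fin 3).succAbove (0:Fin 3).succAbove).det = _
    norm_num [Matrix.det_fin_two, Fin.succAbove, Fin.lt_def]
  have hc21 : cof 2 1 = (-(G 0 0 * G 1 2 - G 0 2 * G 1 0)) := by
    show (-1 : ℝ) ^ (((2:Fin 3) : ℕ) + ((1:Fin 3) : ℕ)) *
      (G.submatrix (2:Fin 3).succAbove (1:Fin 3).succAbove).det = _
    norm_num [Matrix.det_fin_two, Fin.succAbove, Fin.lt_def]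
  have hc22 : cof 2 2 = (G 0 0 * G 1 1 - G 0 1 * G 1 0) := by
    show (-1 : ℝ) ^ (((2:Fin 3) : ℕ) + ((2:Fin 3) : ℕ)) *
      (G.submatrix (2:Fin 3).succAbove (2:Fin 3).succAbove).det = _
    norm_num [Matrix.det_fin_two, Fin.succAbove, Fin.lt_def]
  have hc10 : cof 1 0 = (-(G 0 1 * G 2 2 - G 0 2 * G 2 1)) := by
    show (-1 : ℝ) ^ (((1:Fin 3) : ℕ) + ((0:Fin 3) : ℕ)) *
      (G.submatrix (1:Fin 3).succAbove (0:Fin 3).succAbove).det = _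
    norm_num [Matrix.det_fin_two, Fin.succAbove, Fin.lt_def]
  have hc11 : cof 1 1 = (G 0 0 * G 2 2 - G 0 2 * G 2 0) := by
    show (-1 : ℝ) ^ (((1:Fin 3) : ℕ) + ((1:Fin 3) : ℕ)) *
      (G.submatrix (1:Fin 3).succAbove (1:Fin 3).succAbove).det = _
    norm_num [Matrix.det_fin_two, Fin.succAbove, Fin.lt_def]
  have hc12 : cof 1 2 = (-(G 0 0 * G 2 1 - G 0 1 * G 2 0)) := by
    show (-1 : ℝ) ^ (((1:Fin 3) : ℕ) + ((2:Fin 3) : ℕ)) *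
      (G.submatrix (1:Fin 3).succAbove (2:Fin 3).succAbove).det = _
    norm_num [Matrix.det_fin_two, Fin.succAbove, Fin.lt_def]
  -- positivity of a₁₁
  have hrow : G 0 0 ≠ 0 ∨ G 0 1 ≠ 0 ∨ G 0 2 ≠ 0 := by
    by_contra h
    push_neg at h
    exact hG (by rw [hdet3, h.1, h.2.1, h.2.2]; ring)
  have hSpos : 0 < t ^ (2*p₁) * G 0 0 ^ 2 + t ^ (2*p₂) * G 0 1 ^ 2 + t ^ (2*p₃) * G 0 2 ^ 2 := by
    rcases hrow with h | h | h <;> positivity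
  have hs0 : 0 < a₁₁ := by
    refine Real.sqrt_pos.mpr ?_
    rw [Fin.sum_univ_three, hp0, hp1, hp2]
    exact hSpos
  have hnnS : (0:ℝ) ≤ ∑ α : Fin 3, t ^ (2 * p α) * (G 0 α) ^ 2 := by
    refine Finset.sum_nonneg fun α _ => ?_
    have := Real.rpow_pos_of_pos ht (2 * p α)
    positivity
  have hs2 : a₁₁ ^ 2 = t ^ (2*p₁) * G 0 0 ^ 2 + t ^ (2*p₂) * G 0 1 ^ 2 + t ^ (2*p₃) * G 0 2 ^ 2 := by
    rw [show a₁₁ = Real.sqrt (∑ α : Fin 3, t ^ (2 * p α) * (G 0 α) ^ 2) from rfl,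
      Real.sq_sqrt hnnS, Fin.sum_univ_three, hp0, hp1, hp2]
  -- positivity of Δ
  have hlap : G.det = G 2 0 * (G 0 1 * G 1 2 - G 0 2 * G 1 1) + G 2 1 * (-(G 0 0 * G 1 2 - G 0 2 * G 1 0)) + G 2 2 * (G 0 0 * G 1 1 - G 0 1 * G 1 0) := by
    rw [hdet3]; ring
  have hcne : (G 0 1 * G 1 2 - G 0 2 * G 1 1) ≠ 0 ∨ (-(G 0 0 * G 1 2 - G 0 2 * G 1 0)) ≠ 0 ∨ (G 0 0 * G 1 1 - G 0 1 * G 1 0) ≠ 0 := by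
    by_contra h
    push_neg at h
    exact hG (by rw [hlap, h.1, h.2.1, h.2.2]; ring)
  have hWpos : 0 < t ^ (2*p₂) * t ^ (2*p₃) * (G 0 1 * G 1 2 - G 0 2 * G 1 1) ^ 2 + t ^ (2*p₁) * t ^ (2*p₃) * (-(G 0 0 * G 1 2 - G 0 2 * G 1 0)) ^ 2 + t ^ (2*p₁) * t ^ (2*p₂) * (G 0 0 * G 1 1 - G 0 1 * G 1 0) ^ 2 := by
    rcases hcne with h | h | h <;> positivity
  have hWsum : (∑ α : Fin 3, t ^ (2 * (σ - p α)) * (cof 2 α) ^ 2) = t ^ (2*p₂) * t ^ (2*p₃) * (G 0 1 * G 1 2 - G 0 2 * G 1 1) ^ 2 + t ^ (2*p₁) * t ^ (2*p₃) * (-(G 0 0 * G 1 2 - G 0 2 * G 1 0)) ^ 2 + t ^ (2*p₁) * t ^ (2*p₂) * (G 0 0 * G 1 1 - G 0 1 * G 1 0) ^ 2 := by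
    rw [Fin.sum_univ_three, hE0, hE1, hE2, hc20, hc21, hc22]
  have hw0 : 0 < Δ := by
    refine Real.sqrt_pos.mpr ?_
    rw [hWsum]; exact hWpos
  have hnnW : (0:ℝ) ≤ ∑ α : Fin 3, t ^ (2 * (σ - p α)) * (cof 2 α) ^ 2 := by
    refine Finset.sum_nonneg fun α _ => ?_
    have := Real.rpow_pos_of_pos ht (2 * (σ - p α))
    positivity
  have hw2 : Δ ^ 2 = t ^ (2*p₂) * t ^ (2*p₃) * (G 0 1 * G 1 2 - G 0 2 * G 1 1) ^ 2 + t ^ (2*p₁) * t ^ (2*p₃) * (-(G 0 0 * G 1 2 - G 0 2 * G 1 0)) ^ 2 + t ^ (2*p₁) * t ^ (2*p₂) * (G 0 0 * G 1 1 - G 0 1 * G 1 0) ^ 2 := by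
    rw [show Δ = Real.sqrt (∑ α : Fin 3, t ^ (2 * (σ - p α)) * (cof 2 α) ^ 2) from rfl,
      Real.sq_sqrt hnnW, hWsum]
  -- product identities for the entries of A
  have ha21 : a₂₁ = (t ^ (2*p₁) * G 0 0 * G 1 0 + t ^ (2*p₂) * G 0 1 * G 1 1 + t ^ (2*p₃) * G 0 2 * G 1 2) / a₁₁ := by
    rw [show a₂₁ = (∑ α : Fin 3, t ^ (2 * p α) * G 0 α * G 1 α) / a₁₁ from rfl,
      Fin.sum_univ_three, hp0, hp1, hp2]
  have ha31 : a₃₁ = (t ^ (2*p₁) * G 0 0 * G 2 0 + t ^ (2*p₂) * G 0 1 * G 2 1 + t ^ (2*p₃) * G 0 2 * G 2 2) / a₁₁ := by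
    rw [show a₃₁ = (∑ α : Fin 3, t ^ (2 * p α) * G 0 α * G 2 α) / a₁₁ from rfl,
      Fin.sum_univ_three, hp0, hp1, hp2]
  have ha32 : a₃₂ = (-(t ^ (2*p₂) * t ^ (2*p₃) * (G 0 1 * G 1 2 - G 0 2 * G 1 1) * (-(G 0 1 * G 2 2 - G 0 2 * G 2 1)) + t ^ (2*p₁) * t ^ (2*p₃) * (-(G 0 0 * G 1 2 - G 0 2 * G 1 0)) * (G 0 0 * G 2 2 - G 0 2 * G 2 0) + t ^ (2*p₁) * t ^ (2*p₂) * (G 0 0 * G 1 1 - G 0 1 * G 1 0) * (-(G 0 0 * G 2 1 - G 0 1 * G 2 0)))) / (a₁₁ * Δ) := by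
    rw [show a₃₂ = -(∑ α : Fin 3, t ^ (2 * (σ - p α)) * cof 2 α * cof 1 α) / (a₁₁ * Δ)
        from rfl,
      Fin.sum_univ_three, hE0, hE1, hE2, hc20, hc21, hc22, hc10, hc11, hc12]
  have hm21 : a₂₁ * a₁₁ = t ^ (2*p₁) * G 0 0 * G 1 0 + t ^ (2*p₂) * G 0 1 * G 1 1 + t ^ (2*p₃) * G 0 2 * G 1 2 := by
    rw [ha21, div_mul_cancel₀ _ hs0.ne']
  have hm31 : a₃₁ * a₁₁ = t ^ (2*p₁) * G 0 0 * G 2 0 + t ^ (2*p₂) * G 0 1 * G 2 1 + t ^ (2*p₃) * G 0 2 * G 2 2 := by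
    rw [ha31, div_mul_cancel₀ _ hs0.ne']
  have hm22 : a₂₂ * a₁₁ = Δ := by
    rw [show a₂₂ = Δ / a₁₁ from rfl, div_mul_cancel₀ _ hs0.ne']
  have hm32 : a₃₂ * (a₁₁ * Δ) = -(t ^ (2*p₂) * t ^ (2*p₃) * (G 0 1 * G 1 2 - G 0 2 * G 1 1) * (-(G 0 1 * G 2 2 - G 0 2 * G 2 1)) + t ^ (2*p₁) * t ^ (2*p₃) * (-(G 0 0 * G 1 2 - G 0 2 * G 1 0)) * (G 0 0 * G 2 2 - G 0 2 * G 2 0) + t ^ (2*p₁) * t ^ (2*p₂) * (G 0 0 * G 1 1 - G 0 1 * G 1 0) * (-(G 0 0 * G 2 1 - G 0 1 * G 2 0))) := by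
    rw [ha32, div_mul_cancel₀ _ (mul_ne_zero hs0.ne' hw0.ne')]
  have hm33 : a₃₃ * Δ = |G.det| * t ^ σ := by
    rw [show a₃₃ = |G.det| * t ^ σ / Δ from rfl, div_mul_cancel₀ _ hw0.ne']
  have habs : |G.det| ^ 2 = G.det ^ 2 := sq_abs _
  -- the six scalar entry identities
  have h00 : a₁₁ * a₁₁ = G 0 0 * t ^ (2*p₁) * G 0 0 + G 0 1 * t ^ (2*p₂) * G 0 1 + G 0 2 * t ^ (2*p₃) * G 0 2 := by
    linear_combination hs2
  have h01 : a₁₁ * a₂₁ = G 0 0 * t ^ (2*p₁) * G 1 0 + G 0 1 * t ^ (2*p₂) * G 1 1 + G 0 2 * t ^ (2*p₃) * G 1 2 := by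
    linear_combination hm21
  have h02 : a₁₁ * a₃₁ = G 0 0 * t ^ (2*p₁) * G 2 0 + G 0 1 * t ^ (2*p₂) * G 2 1 + G 0 2 * t ^ (2*p₃) * G 2 2 := by
    linear_combination hm31
  have key11 : (a₂₁ * a₂₁ + a₂₂ * a₂₂) * a₁₁ ^ 2 = (G 1 0 * t ^ (2*p₁) * G 1 0 + G 1 1 * t ^ (2*p₂) * G 1 1 + G 1 2 * t ^ (2*p₃) * G 1 2) * a₁₁ ^ 2 := by
    linear_combination (a₂₁ * a₁₁ + (t ^ (2*p₁) * G 0 0 * G 1 0 + t ^ (2*p₂) * G 0 1 * G 1 1 + t ^ (2*p₃) * G 0 2 * G 1 2)) * hm21 + (a₂₂ * a₁₁ + Δ) * hm22 + hw2 -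
      (G 1 0 * t ^ (2*p₁) * G 1 0 + G 1 1 * t ^ (2*p₂) * G 1 1 + G 1 2 * t ^ (2*p₃) * G 1 2) * hs2
  have h11 : a₂₁ * a₂₁ + a₂₂ * a₂₂ = G 1 0 * t ^ (2*p₁) * G 1 0 + G 1 1 * t ^ (2*p₂) * G 1 1 + G 1 2 * t ^ (2*p₃) * G 1 2 :=
    mul_right_cancel₀ (pow_ne_zero 2 hs0.ne') key11
  have key12 : (a₂₁ * a₃₁ + a₂₂ * a₃₂) * (a₁₁ ^ 2 * Δ) = (G 1 0 * t ^ (2*p₁) * G 2 0 + G 1 1 * t ^ (2*p₂) * G 2 1 + G 1 2 * t ^ (2*p₃) * G 2 2) * (a₁₁ ^ 2 * Δ) := by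
    linear_combination (Δ * (a₃₁ * a₁₁)) * hm21 + (Δ * (t ^ (2*p₁) * G 0 0 * G 1 0 + t ^ (2*p₂) * G 0 1 * G 1 1 + t ^ (2*p₃) * G 0 2 * G 1 2)) * hm31 +
      (a₃₂ * a₁₁ * Δ) * hm22 + Δ * hm32 - ((G 1 0 * t ^ (2*p₁) * G 2 0 + G 1 1 * t ^ (2*p₂) * G 2 1 + G 1 2 * t ^ (2*p₃) * G 2 2) * Δ) * hs2
  have h12 : a₂₁ * a₃₁ + a₂₂ * a₃₂ = G 1 0 * t ^ (2*p₁) * G 2 0 + G 1 1 * t ^ (2*p₂) * G 2 1 + G 1 2 * t ^ (2*p₃) * G 2 2 :=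
    mul_right_cancel₀ (mul_ne_zero (pow_ne_zero 2 hs0.ne') hw0.ne') key12
  have key22 : (a₃₁ * a₃₁ + a₃₂ * a₃₂ + a₃₃ * a₃₃) * (a₁₁ ^ 2 * Δ ^ 2) =
      (G 2 0 * t ^ (2*p₁) * G 2 0 + G 2 1 * t ^ (2*p₂) * G 2 1 + G 2 2 * t ^ (2*p₃) * G 2 2) * (a₁₁ ^ 2 * Δ ^ 2) := by
    linear_combination (a₃₁ * a₁₁ + (t ^ (2*p₁) * G 0 0 * G 2 0 + t ^ (2*p₂) * G 0 1 * G 2 1 + t ^ (2*p₃) * G 0 2 * G 2 2)) * Δ ^ 2 * hm31 +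
      (a₃₂ * (a₁₁ * Δ) - (t ^ (2*p₂) * t ^ (2*p₃) * (G 0 1 * G 1 2 - G 0 2 * G 1 1) * (-(G 0 1 * G 2 2 - G 0 2 * G 2 1)) + t ^ (2*p₁) * t ^ (2*p₃) * (-(G 0 0 * G 1 2 - G 0 2 * G 1 0)) * (G 0 0 * G 2 2 - G 0 2 * G 2 0) + t ^ (2*p₁) * t ^ (2*p₂) * (G 0 0 * G 1 1 - G 0 1 * G 1 0) * (-(G 0 0 * G 2 1 - G 0 1 * G 2 0)))) * hm32 +
      (a₃₃ * Δ + |G.det| * t ^ σ) * a₁₁ ^ 2 * hm33 +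
      (t ^ σ) ^ 2 * a₁₁ ^ 2 * habs +
      G.det ^ 2 * a₁₁ ^ 2 * hT2 +
      ((G.det + (G 0 0 * G 1 1 * G 2 2 - G 0 0 * G 1 2 * G 2 1 - G 0 1 * G 1 0 * G 2 2 + G 0 1 * G 1 2 * G 2 0 + G 0 2 * G 1 0 * G 2 1 - G 0 2 * G 1 1 * G 2 0)) * (t ^ (2*p₁) * t ^ (2*p₂) * t ^ (2*p₃)) * (t ^ (2*p₁) * G 0 0 ^ 2 + t ^ (2*p₂) * G 0 1 ^ 2 + t ^ (2*p₃) * G 0 2 ^ 2)) * hdet3 +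
      ((t ^ (2*p₁) * G 0 0 * G 2 0 + t ^ (2*p₂) * G 0 1 * G 2 1 + t ^ (2*p₃) * G 0 2 * G 2 2) ^ 2 - (G 2 0 * t ^ (2*p₁) * G 2 0 + G 2 1 * t ^ (2*p₂) * G 2 1 + G 2 2 * t ^ (2*p₃) * G 2 2) * (t ^ (2*p₁) * G 0 0 ^ 2 + t ^ (2*p₂) * G 0 1 ^ 2 + t ^ (2*p₃) * G 0 2 ^ 2)) * hw2 +
      (G.det ^ 2 * (t ^ (2*p₁) * t ^ (2*p₂) * t ^ (2*p₃)) - (G 2 0 * t ^ (2*p₁) * G 2 0 + G 2 1 * t ^ (2*p₂) * G 2 1 + G 2 2 * t ^ (2*p₃) * G 2 2) * Δ ^ 2) * hs2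
  have h22 : a₃₁ * a₃₁ + a₃₂ * a₃₂ + a₃₃ * a₃₃ = G 2 0 * t ^ (2*p₁) * G 2 0 + G 2 1 * t ^ (2*p₂) * G 2 1 + G 2 2 * t ^ (2*p₃) * G 2 2 :=
    mul_right_cancel₀ (mul_ne_zero (pow_ne_zero 2 hs0.ne') (pow_ne_zero 2 hw0.ne')) key22
  -- the matrix identity
  have hA : A = !![a₁₁, 0, 0; a₂₁, a₂₂, 0; a₃₁, a₃₂, a₃₃] := rfl
  have hD : D = Matrix.diagonal fun α => t ^ (2 * p α) := rfl
  have hmatrix : A * Aᵀ = G * D * Gᵀ := by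
    ext i j
    fin_cases i <;> fin_cases j <;>
      simp only [hA, hD, Matrix.mul_apply, Fin.sum_univ_three, Matrix.diagonal,
        Matrix.transpose_apply, Matrix.vecHead, Matrix.vecTail] <;>
      simp [hp0, hp1, hp2]
    · linear_combination h00
    · linear_combination h01
    · linear_combination h02
    · linear_combination h01
    · linear_combination h11
    · linear_combination h12
    · linear_combination h02
    · linear_combination h12
    · linear_combination h22
  -- determinants
  have hdetD : D.det = t ^ (2*σ) := by
    rw [hD, Matrix.det_diagonal, Fin.prod_univ_three, hp0, hp1, hp2, hTσ]
  have hdet1 : (G * D * Gᵀ).det = G.det ^ 2 * t ^ (2 * σ) := by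
    rw [Matrix.det_mul, Matrix.det_mul, Matrix.det_transpose, hdetD]
    ring
  have hprod : a₁₁ * a₂₂ * a₃₃ = |G.det| * t ^ σ := by
    rw [show a₂₂ = Δ / a₁₁ from rfl, show a₃₃ = |G.det| * t ^ σ / Δ from rfl]
    field_simp
  refine ⟨hs0, hw0, hmatrix, hdet1, ?_⟩
  rw [hdet1, hprod, mul_pow, sq_abs, hT2, hTσ]
end
end
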